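/- For every σ ≥ 1 there exists a constant C > 0 depending only on p and σ such that for every σ-quasi-uniform partition of [a,b], every piecewise polynomial u^R = (P₀,…,P_N) of degree ≤ p with respect to it, and every function u that is (p+1)-times continuously differentiable on [a,b], one has, for all 1 ≤ i ≤ N and all 0 ≤ k ≤ p, |J_i^{(k)}| ≤ C h^{−k} ( h^{p+1} |u|_{W^{p+1}_∞} + ‖u − u^R‖_{L^∞(a,b)} ). -/

import Mathlib

open MeasureTheory

noncomputable section

/-- Maximal mesh size `h` of the partition `x 0 < x 1 < ... < x (N+1)`. -/
def meshH (N : ℕ) (x : ℕ → ℝ) : ℝ :=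
  (Finset.range (N + 1)).sup' (Finset.nonempty_range_iff.mpr (Nat.succ_ne_zero N))
    (fun i => x (i + 1) - x i)

/-- Minimal mesh size `h_min`. -/
def meshHmin (N : ℕ) (x : ℕ → ℝ) : ℝ :=
  (Finset.range (N + 1)).inf' (Finset.nonempty_range_iff.mpr (Nat.succ_ne_zero N))
    (fun i => x (i + 1) - x i)

/-- Jump of the `k`-th derivative of the piecewise polynomial `P` at the node `x i`. -/
def jumpD (P : ℕ → Polynomial ℝ) (x : ℕ → ℝ) (i k : ℕ) : ℝ :=
  (Polynomial.derivative^[k] (P i)).eval (x i)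
    - (Polynomial.derivative^[k] (P (i - 1))).eval (x i)

/-- `L^∞` distance between `u` and the piecewise polynomial `u^R` defined by `P`. -/
def distLinf (N : ℕ) (x : ℕ → ℝ) (P : ℕ → Polynomial ℝ) (u : ℝ → ℝ) : ℝ :=
  (Finset.range (N + 1)).sup' (Finset.nonempty_range_iff.mpr (Nat.succ_ne_zero N))
    (fun i => sSup ((fun t => |u t - (P i).eval t|) '' Set.Icc (x i) (x (i + 1))))

/-- Sobolev seminorm `|u|_{W^{p+1}_∞}` on `[a,b]`. -/
def semiWinf (p : ℕ) (a b : ℝ) (u : ℝ → ℝ) : ℝ :=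
  sSup ((fun t => |iteratedDerivWithin (p + 1) u (Set.Icc a b) t|) '' Set.Icc a b)

/-!
Write `x₋ < x₀ < x₊` for the nodes `x (i-1), x i, x (i+1)` and let `T` be the Taylor polynomial
of degree `p` of `u` at `x₋`, so that `|u - T| ≤ |u|_{W^{p+1}_∞} (2h)^{p+1}` on `[x₋, x₊]`.
The jump at `x₀` is the difference of the `k`-th derivatives of `P i - T` and `P (i-1) - T`
there, and on its own cell each of these polynomials is bounded by
`‖u - u^R‖_∞ + |u|_{W^{p+1}_∞} (2h)^{p+1}`. A Markov-type inverse inequality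
`|I|^k |Q^{(k)}| ≤ C sup_I |Q|` for `deg Q ≤ p` (on `[0,1]` by Lagrange interpolation at `p + 1`
nodes, on any interval `I` by affine rescaling) and the quasi-uniformity bound `|I| ≥ h / σ`
for both cells finish the estimate.
-/

open Polynomial Set

theorem Polynomial.iterate_derivative_comp_C_mul_X_add_C {R : Type*} [CommRing R]
    (Q : R[X]) (l c : R) (k : ℕ) :
    derivative^[k] (Q.comp (C l * X + C c)) =
      C (l ^ k) * (derivative^[k] Q).comp (C l * X + C c) := by
  induction k generalizing Q with
  | zero => simp
  | succ k ih =>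
    rw [Function.iterate_succ_apply, derivative_comp, Function.iterate_succ_apply, derivative_add,
      derivative_C_mul_X, derivative_C, add_zero, iterate_derivative_C_mul, ih, pow_succ, C_mul]
    ring

theorem exists_abs_eval_iterate_derivative_le_on_unitInterval (p : ℕ) :
    ∃ A, 0 < A ∧ ∀ Q : ℝ[X], Q.natDegree ≤ p → ∀ M, (∀ s ∈ Icc (0 : ℝ) 1, |Q.eval s| ≤ M) →
      ∀ k, ∀ t ∈ Icc (0 : ℝ) 1, |(derivative^[k] Q).eval t| ≤ A * M := by
  set v : Fin (p + 1) → ℝ := fun j => j / (p + 1)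
  have hv : InjOn v (Finset.univ : Finset (Fin (p + 1))) := by
    intro i _ j _ hij
    simp only [v, div_left_inj' (by positivity : (p + 1 : ℝ) ≠ 0), Nat.cast_inj] at hij
    exact Fin.ext hij
  have hv_mem (j : Fin (p + 1)) : v j ∈ Icc (0 : ℝ) 1 :=
    ⟨by positivity, div_le_one_of_le₀ (by norm_cast; omega) (by positivity)⟩
  set L := Lagrange.basis Finset.univ v
  obtain ⟨B, hB⟩ := ((isCompact_univ.prod (finite_Iic p).isCompact).prod
      isCompact_Icc).exists_bound_of_continuousOn
    (f := fun q : (Fin (p + 1) × ℕ) × ℝ => (derivative^[q.1.2] (L q.1.1)).eval q.2)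
    (continuous_prod_of_discrete_left.mpr fun a =>
      Polynomial.continuous (derivative^[a.2] (L a.1))).continuousOn
  have hL (i : Fin (p + 1)) (k : ℕ) (t : ℝ) (ht : t ∈ Icc (0 : ℝ) 1) :
      |(derivative^[k] (L i)).eval t| ≤ max B 1 := by
    rcases le_or_gt k p with hk | hk
    · exact le_max_of_le_left (hB ((i, k), t) ⟨⟨mem_univ _, hk⟩, ht⟩)
    · rw [iterate_derivative_eq_zero (by simpa [L, Lagrange.natDegree_basis hv] using hk)]
      simp
  refine ⟨(p + 1) * max B 1, by positivity, fun Q hQ M hM k t ht => ?_⟩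
  have hM0 : 0 ≤ M := (abs_nonneg _).trans (hM 0 ⟨le_rfl, zero_le_one⟩)
  have hQL : Q = ∑ i, C (Q.eval (v i)) * L i := by
    refine (Lagrange.eq_interpolate hv ((degree_le_of_natDegree_le hQ).trans_lt ?_)).trans
      (Lagrange.interpolate_apply _ _ _)
    rw [Finset.card_univ, Fintype.card_fin]
    exact WithBot.coe_lt_coe.mpr p.lt_succ_self
  calc |(derivative^[k] Q).eval t|
      = |∑ i, Q.eval (v i) * (derivative^[k] (L i)).eval t| := by
        conv_lhs => rw [hQL]
        simp [iterate_derivative_sum, iterate_derivative_C_mul, eval_finsetSum]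
    _ ≤ ∑ i, |Q.eval (v i)| * |(derivative^[k] (L i)).eval t| :=
        (Finset.abs_sum_le_sum_abs _ _).trans_eq (by simp only [abs_mul])
    _ ≤ ∑ _i : Fin (p + 1), M * max B 1 := by
        gcongr with i
        exacts [hM _ (hv_mem i), hL i k t ht]
    _ = (p + 1) * max B 1 * M := by
        rw [Finset.sum_const, Finset.card_univ, Fintype.card_fin, nsmul_eq_mul]; push_cast; ring

theorem exists_pow_mul_abs_eval_iterate_derivative_le (p : ℕ) :
    ∃ A, 0 < A ∧ ∀ {c d : ℝ}, c < d → ∀ Q : ℝ[X], Q.natDegree ≤ p →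
      ∀ M, (∀ s ∈ Icc c d, |Q.eval s| ≤ M) →
      ∀ k, ∀ t ∈ Icc c d, (d - c) ^ k * |(derivative^[k] Q).eval t| ≤ A * M := by
  obtain ⟨A, hA, hunit⟩ := exists_abs_eval_iterate_derivative_le_on_unitInterval p
  refine ⟨A, hA, fun {c d} hcd Q hQ M hM k t ht => ?_⟩
  set l := d - c
  have hl : 0 < l := sub_pos.2 hcd
  set q : ℝ[X] := C l * X + C c
  have hq (s : ℝ) : q.eval s = c + l * s := by
    simp only [q, eval_add, eval_mul, eval_C, eval_X]; ring
  have hdeg : (Q.comp q).natDegree ≤ p :=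
    natDegree_comp_le.trans ((Nat.mul_le_mul hQ natDegree_linear_le).trans_eq (mul_one p))
  have hMq (s : ℝ) (hs : s ∈ Icc (0 : ℝ) 1) : |(Q.comp q).eval s| ≤ M := by
    rw [eval_comp, hq]
    exact hM _ ⟨by nlinarith [hs.1], by nlinarith [hs.2]⟩
  have hts : (t - c) / l ∈ Icc (0 : ℝ) 1 :=
    ⟨div_nonneg (sub_nonneg.2 ht.1) hl.le, (div_le_one hl).2 (by linarith [ht.2])⟩
  have := hunit (Q.comp q) hdeg M hMq k _ hts
  rwa [iterate_derivative_comp_C_mul_X_add_C, eval_mul, eval_C, eval_comp, hq,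
    mul_div_cancel₀ _ hl.ne', add_sub_cancel, abs_mul, abs_pow, abs_of_pos hl] at this

theorem exists_natDegree_le_abs_sub_eval_le {u : ℝ → ℝ} {s : Set ℝ} {c d K : ℝ} {p : ℕ}
    (hs : UniqueDiffOn ℝ s) (hcd : c < d) (hsub : Icc c d ⊆ s)
    (hu : ContDiffOn ℝ (p + 1 : ℕ) u s)
    (hK : ∀ t ∈ Icc c d, |iteratedDerivWithin (p + 1) u s t| ≤ K) :
    ∃ T : ℝ[X], T.natDegree ≤ p ∧ ∀ t ∈ Icc c d, |u t - T.eval t| ≤ K * (d - c) ^ (p + 1) := by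
  set T : ℝ[X] := ∑ j ∈ Finset.range (p + 1),
    C ((j.factorial : ℝ)⁻¹ * iteratedDerivWithin j u (Icc c d) c) * (X - C c) ^ j
  have hT (t : ℝ) : T.eval t = taylorWithinEval u p (Icc c d) c t := by
    simp only [T, taylor_within_apply, eval_finsetSum, eval_mul, eval_C, eval_pow, eval_sub,
      eval_X, smul_eq_mul]
    exact Finset.sum_congr rfl fun j _ => by ring
  have hK' (y : ℝ) (hy : y ∈ Icc c d) : ‖iteratedDerivWithin (p + 1) u (Icc c d) y‖ ≤ K := by
    rw [Real.norm_eq_abs, iteratedDerivWithin_eq_iteratedFDerivWithin,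
      iteratedFDerivWithin_subset hsub (uniqueDiffOn_Icc hcd) hs hu hy,
      ← iteratedDerivWithin_eq_iteratedFDerivWithin]
    exact hK y hy
  have hK0 : 0 ≤ K := (abs_nonneg _).trans (hK c ⟨le_rfl, hcd.le⟩)
  refine ⟨T, natDegree_sum_le_of_forall_le _ _ fun j hj => ?_, fun t ht => ?_⟩
  · refine (natDegree_C_mul_le _ _).trans (natDegree_pow_le.trans ?_)
    rw [natDegree_X_sub_C, mul_one]
    exact Finset.mem_range_succ_iff.1 hj
  calc |u t - T.eval t| = ‖u t - taylorWithinEval u p (Icc c d) c t‖ := by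
        rw [hT, Real.norm_eq_abs]
    _ ≤ K * (t - c) ^ (p + 1) / p.factorial :=
        taylor_mean_remainder_bound hcd.le (hu.mono hsub) ht hK'
    _ ≤ K * (t - c) ^ (p + 1) :=
        div_le_self (by have := sub_nonneg.2 ht.1; positivity) (by exact_mod_cast p.factorial_pos)
    _ ≤ K * (d - c) ^ (p + 1) := by
        have := sub_nonneg.2 ht.1
        gcongr
        exact ht.2

theorem exists_pow_mul_abs_jump_le (p : ℕ) :
    ∃ A, 0 < A ∧ ∀ {u : ℝ → ℝ} {s : Set ℝ} {c m d g D K : ℝ} {Q₁ Q₂ : ℝ[X]},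
      UniqueDiffOn ℝ s → Icc c d ⊆ s → ContDiffOn ℝ (p + 1 : ℕ) u s →
      (∀ t ∈ Icc c d, |iteratedDerivWithin (p + 1) u s t| ≤ K) →
      Q₁.natDegree ≤ p → Q₂.natDegree ≤ p →
      (∀ t ∈ Icc c m, |u t - Q₁.eval t| ≤ D) → (∀ t ∈ Icc m d, |u t - Q₂.eval t| ≤ D) →
      0 < g → g ≤ m - c → g ≤ d - m → ∀ k,
      g ^ k * |(derivative^[k] Q₂).eval m - (derivative^[k] Q₁).eval m| ≤
        A * (D + K * (d - c) ^ (p + 1)) := by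
  obtain ⟨A, hA, hmarkov⟩ := exists_pow_mul_abs_eval_iterate_derivative_le p
  refine ⟨2 * A, by positivity,
    fun {u s c m d g D K Q₁ Q₂} hs hsub hu hK hQ₁ hQ₂ hD₁ hD₂ hg hgm hgd k => ?_⟩
  have hcm : c < m := by linarith
  have hmd : m < d := by linarith
  obtain ⟨T, hT, hTu⟩ := exists_natDegree_le_abs_sub_eval_le hs (hcm.trans hmd) hsub hu hK
  set E := K * (d - c) ^ (p + 1)
  have hcell {c' d' : ℝ} {Q : ℝ[X]} (hcd' : c' < d') (hsub' : Icc c' d' ⊆ Icc c d)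
      (hQ : Q.natDegree ≤ p) (hQu : ∀ t ∈ Icc c' d', |u t - Q.eval t| ≤ D) (hg' : g ≤ d' - c')
      (hm : m ∈ Icc c' d') : g ^ k * |(derivative^[k] (Q - T)).eval m| ≤ A * (D + E) := by
    have hdeg : (Q - T).natDegree ≤ p := (natDegree_sub_le _ _).trans (max_le hQ hT)
    have hQT (t : ℝ) (ht : t ∈ Icc c' d') : |(Q - T).eval t| ≤ D + E := by
      rw [eval_sub, ← sub_sub_sub_cancel_left _ _ (u t), abs_sub_comm]
      exact (abs_sub _ _).trans (add_le_add (hQu t ht) (hTu t (hsub' ht)))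
    calc g ^ k * |(derivative^[k] (Q - T)).eval m|
        ≤ (d' - c') ^ k * |(derivative^[k] (Q - T)).eval m| := by gcongr
      _ ≤ A * (D + E) := hmarkov hcd' _ hdeg _ hQT k m hm
  have h₁ := hcell hcm (Icc_subset_Icc le_rfl hmd.le) hQ₁ hD₁ hgm ⟨hcm.le, le_rfl⟩
  have h₂ := hcell hmd (Icc_subset_Icc hcm.le le_rfl) hQ₂ hD₂ hgd ⟨le_rfl, hmd.le⟩
  have hjump : (derivative^[k] Q₂).eval m - (derivative^[k] Q₁).eval m =
      (derivative^[k] (Q₂ - T)).eval m - (derivative^[k] (Q₁ - T)).eval m := by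
    simp only [iterate_derivative_sub, eval_sub]; ring
  rw [hjump]
  calc g ^ k * |(derivative^[k] (Q₂ - T)).eval m - (derivative^[k] (Q₁ - T)).eval m|
      ≤ g ^ k * |(derivative^[k] (Q₂ - T)).eval m| +
          g ^ k * |(derivative^[k] (Q₁ - T)).eval m| := by
        rw [← mul_add]; gcongr; exact abs_sub _ _
    _ ≤ 2 * A * (D + E) := by linarith

section Partition

variable {N : ℕ} {x : ℕ → ℝ}

theorem sub_le_meshH {j : ℕ} (hj : j ≤ N) : x (j + 1) - x j ≤ meshH N x :=
  Finset.le_sup' (fun i => x (i + 1) - x i) (Finset.mem_range_succ_iff.2 hj)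

theorem meshHmin_le_sub {j : ℕ} (hj : j ≤ N) : meshHmin N x ≤ x (j + 1) - x j :=
  Finset.inf'_le (fun i => x (i + 1) - x i) (Finset.mem_range_succ_iff.2 hj)

theorem meshH_div_le_sub {σ : ℝ} (hσ : 0 < σ) (hquasi : meshH N x ≤ σ * meshHmin N x)
    {j : ℕ} (hj : j ≤ N) : meshH N x / σ ≤ x (j + 1) - x j :=
  (div_le_iff₀ hσ).2 (by nlinarith [meshHmin_le_sub (x := x) hj])

theorem Icc_subset_Icc_of_forall_lt_succ (hx : ∀ i ≤ N, x i < x (i + 1)) {l l' : ℕ}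
    (hl : l ≤ l') (hl' : l' ≤ N + 1) : Icc (x l) (x l') ⊆ Icc (x 0) (x (N + 1)) := by
  have hmono {i j : ℕ} (hij : i ≤ j) (hj : j ≤ N + 1) : x i ≤ x j := by
    induction j, hij using Nat.le_induction with
    | base => exact le_rfl
    | succ j _ ih => exact (ih (by omega)).trans (hx j (by omega)).le
  exact Icc_subset_Icc (hmono l.zero_le (by omega)) (hmono hl' le_rfl)

theorem abs_sub_eval_le_distLinf {P : ℕ → ℝ[X]} {u : ℝ → ℝ} {j : ℕ} {t : ℝ} (hj : j ≤ N)
    (hu : ContinuousOn u (Icc (x j) (x (j + 1)))) (ht : t ∈ Icc (x j) (x (j + 1))) :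
    |u t - (P j).eval t| ≤ distLinf N x P u :=
  (le_csSup (isCompact_Icc.bddAbove_image (hu.sub (P j).continuous.continuousOn).abs)
    (mem_image_of_mem _ ht)).trans
    (Finset.le_sup' (fun i => sSup ((fun t => |u t - (P i).eval t|) '' Icc (x i) (x (i + 1))))
      (Finset.mem_range_succ_iff.2 hj))

end Partition

theorem abs_iteratedDerivWithin_le_semiWinf {p : ℕ} {a b t : ℝ} {u : ℝ → ℝ} (hab : a < b)
    (hu : ContDiffOn ℝ (p + 1 : ℕ) u (Icc a b)) (ht : t ∈ Icc a b) :
    |iteratedDerivWithin (p + 1) u (Icc a b) t| ≤ semiWinf p a b u :=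
  le_csSup (isCompact_Icc.bddAbove_image
    (hu.continuousOn_iteratedDerivWithin le_rfl (uniqueDiffOn_Icc hab)).abs)
    (mem_image_of_mem _ ht)

theorem le_div_pow_of_div_pow_mul_le {p k : ℕ} {σ h A D K l J : ℝ} (hσ : 1 ≤ σ) (hk : k ≤ p)
    (hh : 0 < h) (hA : 0 ≤ A) (hD : 0 ≤ D) (hK : 0 ≤ K) (hl₀ : 0 ≤ l) (hl : l ≤ 2 * h)
    (hJ : 0 ≤ J) (H : (h / σ) ^ k * J ≤ A * (D + K * l ^ (p + 1))) :
    J ≤ A * σ ^ p * 2 ^ (p + 1) * (h ^ (p + 1) * K + D) / h ^ k := by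
  have hσ0 : 0 < σ := by linarith
  rw [le_div_iff₀ (by positivity)]
  calc J * h ^ k = σ ^ k * ((h / σ) ^ k * J) := by
        rw [← mul_assoc, ← mul_pow, mul_div_cancel₀ h hσ0.ne', mul_comm]
    _ ≤ σ ^ p * (A * (D + K * (2 * h) ^ (p + 1))) :=
        mul_le_mul (pow_le_pow_right₀ hσ hk) (H.trans (by gcongr)) (by positivity) (by positivity)
    _ = A * σ ^ p * (D + 2 ^ (p + 1) * (h ^ (p + 1) * K)) := by ring
    _ ≤ A * σ ^ p * (2 ^ (p + 1) * D + 2 ^ (p + 1) * (h ^ (p + 1) * K)) := by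
        gcongr
        exact le_mul_of_one_le_left hD (one_le_pow₀ one_le_two)
    _ = A * σ ^ p * 2 ^ (p + 1) * (h ^ (p + 1) * K + D) := by ring

/-- 1-D jump estimate: on a quasi-uniform mesh, every jump of a `k`-th derivative is
controlled by `h^{-k} (h^{p+1} |u|_{W^{p+1}_∞} + ‖u - u^R‖_∞)`. -/
theorem jump_bound_linf (p : ℕ) (σ : ℝ) (hσ : 1 ≤ σ) :
    ∃ C : ℝ, 0 < C ∧
      ∀ (N : ℕ), 1 ≤ N → ∀ (a b : ℝ), a < b →
      ∀ (x : ℕ → ℝ), x 0 = a → x (N + 1) = b → (∀ i ≤ N, x i < x (i + 1)) →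
      meshH N x ≤ σ * meshHmin N x →
      ∀ (P : ℕ → Polynomial ℝ), (∀ i ≤ N, (P i).natDegree ≤ p) →
      ∀ (u : ℝ → ℝ), ContDiffOn ℝ (p + 1 : ℕ) u (Set.Icc a b) →
      ∀ i, 1 ≤ i → i ≤ N → ∀ k ≤ p,
      |jumpD P x i k| ≤
        C * (meshH N x ^ (p + 1) * semiWinf p a b u + distLinf N x P u) / meshH N x ^ k := by
  obtain ⟨A, hA, hjump⟩ := exists_pow_mul_abs_jump_le p
  refine ⟨A * σ ^ p * 2 ^ (p + 1), by positivity, ?_⟩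
  rintro N - a b hab x rfl rfl hx hquasi P hP u hu i hi hiN k hk
  obtain ⟨j, rfl⟩ : ∃ j, i = j + 1 := ⟨i - 1, by omega⟩
  have hdist {l : ℕ} (hl : l ≤ N) (t : ℝ) (ht : t ∈ Icc (x l) (x (l + 1))) :
      |u t - (P l).eval t| ≤ distLinf N x P u :=
    abs_sub_eval_le_distLinf hl
      (hu.continuousOn.mono (Icc_subset_Icc_of_forall_lt_succ hx l.le_succ (by omega))) ht
  have hsemi (t : ℝ) (ht : t ∈ Icc (x 0) (x (N + 1))) :=
    abs_iteratedDerivWithin_le_semiWinf hab hu ht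
  have hcells := Icc_subset_Icc_of_forall_lt_succ hx (j.le_add_right 2) (by omega)
  have hσ₀ : 0 < σ := by linarith
  have hh : 0 < meshH N x := (sub_pos.2 (hx 0 N.zero_le)).trans_le (sub_le_meshH N.zero_le)
  have hlocal := hjump (uniqueDiffOn_Icc hab) hcells hu (fun t ht => hsemi t (hcells ht))
    (hP j (by omega)) (hP (j + 1) hiN) (hdist (by omega)) (hdist hiN) (by positivity)
    (meshH_div_le_sub hσ₀ hquasi (by omega)) (meshH_div_le_sub hσ₀ hquasi hiN) k
  rw [jumpD, Nat.add_sub_cancel]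
  exact le_div_pow_of_div_pow_mul_le hσ hk hh hA.le
    ((abs_nonneg _).trans (hdist N.zero_le _ ⟨le_rfl, (hx 0 N.zero_le).le⟩))
    ((abs_nonneg _).trans (hsemi _ ⟨le_rfl, hab.le⟩))
    (by linarith [hx j (by omega), hx (j + 1) hiN])
    (by linarith [sub_le_meshH (x := x) (show j ≤ N by omega), sub_le_meshH (x := x) hiN])
    (abs_nonneg _) hlocal

end
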